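/- γ_rdR(K_n ⊙ K₁) = 2n + 1 for n ≠ 2, and γ_rdR(K₂ ⊙ K₁) = 6. -/

import Mathlib

open SimpleGraph Finset

/-- A restrained double Roman dominating function. -/
def IsRDRD {α : Type*} (G : SimpleGraph α) (f : α → ℕ) : Prop :=
  (∀ v, f v ≤ 3) ∧
  (∀ v, f v = 0 →
    (∃ u, G.Adj v u ∧ f u = 3) ∨
    (∃ u w, u ≠ w ∧ G.Adj v u ∧ G.Adj v w ∧ f u = 2 ∧ f w = 2)) ∧
  (∀ v, f v = 1 → ∃ u, G.Adj v u ∧ 2 ≤ f u) ∧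
  (∀ v, f v = 0 → ∃ u, G.Adj v u ∧ f u = 0)

/-- The restrained double Roman domination number. -/
noncomputable def gammaRdR {α : Type*} (G : SimpleGraph α) [Fintype α] : ℕ :=
  sInf {w | ∃ f, IsRDRD G f ∧ ∑ v, f v = w}

/-- The strong product of two simple graphs. -/
def strongProd {α β : Type*} (G : SimpleGraph α) (H : SimpleGraph β) :
    SimpleGraph (α × β) where
  Adj p q := p ≠ q ∧ (G.Adj p.1 q.1 ∨ p.1 = q.1) ∧ (H.Adj p.2 q.2 ∨ p.2 = q.2)
  symm := ⟨by
    rintro p q ⟨h1, h2, h3⟩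
    exact ⟨h1.symm, h2.imp (fun h => h.symm) Eq.symm, h3.imp (fun h => h.symm) Eq.symm⟩⟩
  loopless := ⟨by rintro p ⟨h1, _⟩; exact h1 rfl⟩

/-- The cardinal (direct/tensor) product of two simple graphs. -/
def cardProd {α β : Type*} (G : SimpleGraph α) (H : SimpleGraph β) :
    SimpleGraph (α × β) where
  Adj p q := G.Adj p.1 q.1 ∧ H.Adj p.2 q.2
  symm := ⟨by rintro p q ⟨h1, h2⟩; exact ⟨h1.symm, h2.symm⟩⟩
  loopless := ⟨by rintro p ⟨h1, _⟩; exact h1.ne rfl⟩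

/-- The corona of two simple graphs. -/
def corona {α β : Type*} (G : SimpleGraph α) (H : SimpleGraph β) :
    SimpleGraph (α ⊕ α × β) where
  Adj x y :=
    match x, y with
    | .inl u, .inl v => G.Adj u v
    | .inl u, .inr (v, _) => u = v
    | .inr (v, _), .inl u => u = v
    | .inr (u, a), .inr (v, b) => u = v ∧ H.Adj a b
  symm := ⟨by
    rintro (u | ⟨u, a⟩) (v | ⟨v, b⟩) h
    · exact h.symm
    · exact h
    · exact h
    · exact ⟨h.1.symm, h.2.symm⟩⟩
  loopless := ⟨by
    rintro (u | ⟨u, a⟩) h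
    · exact h.ne rfl
    · exact h.2.ne rfl⟩

/-! In `G ⊙ K₁` each vertex `u` of `G` and its pendant `u'` together carry weight at least 2,
with equality only when `f u = 0` and `f u' = 2`. If all these pairs had weight 2, every vertex
of `G` would carry 0 and none of them could be dominated; hence the weight is at least
`2|V(G)| + 1`.
If `u` has at most one neighbour in `G`, that neighbour cannot serve both the restraint and the
domination condition at `u`, so the pair of `u` weighs at least 3; for `K₂` this gives 6.
The bounds are attained by 2 on a universal vertex `c`, 1 on its pendant, 0 on the rest of `G`
and 2 on the other pendants (valid when `G - c` has no isolated vertex, i.e. `n ≠ 2` for `Kₙ`),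
and for `K₂` by 2 on `G` and 1 on the pendants. -/

namespace SimpleGraph

variable {α β : Type*} {G : SimpleGraph α}

lemma corona_bot_adj_inr {u : α} {a : β} {x : α ⊕ α × β} :
    (corona G (⊥ : SimpleGraph β)).Adj (.inr (u, a)) x ↔ x = .inl u := by
  rcases x with v | ⟨v, b⟩
  · exact ⟨fun h => congrArg Sum.inl h, fun h => Sum.inl_injective h⟩
  · exact ⟨fun h => absurd h.2 id, fun h => (Sum.inr_ne_inl h).elim⟩

lemma corona_adj_inl [Unique β] {H : SimpleGraph β} {u : α} {x : α ⊕ α × β}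
    (h : (corona G H).Adj (.inl u) x) :
    (∃ v, x = .inl v ∧ G.Adj u v) ∨ x = .inr (u, default) := by
  rcases x with v | ⟨v, b⟩
  · exact .inl ⟨v, rfl, h⟩
  · obtain rfl : u = v := h
    exact .inr (by rw [Unique.eq_default b])

lemma sum_corona [Fintype α] [Fintype β] [Unique β] (f : α ⊕ α × β → ℕ) :
    ∑ x, f x = ∑ u, (f (.inl u) + f (.inr (u, default))) := by
  rw [Fintype.sum_sum_type, Fintype.sum_prod_type, ← Finset.sum_add_distrib]
  simp only [Fintype.sum_unique]

namespace IsRDRD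

variable [Unique β] {f : α ⊕ α × β → ℕ}

lemma eq_zero_and_eq_two_of_le_two (hf : IsRDRD (corona G ⊥) f) (u : α)
    (h : f (.inl u) + f (.inr (u, default)) ≤ 2) :
    f (.inl u) = 0 ∧ f (.inr (u, default)) = 2 := by
  obtain ⟨-, hdom, hone, hres⟩ := hf
  have hne_zero : f (.inr (u, default)) ≠ 0 := by
    intro h0
    -- the only neighbour `inl u` would need weight 0 (restraint) and weight 3 (domination)
    obtain ⟨x, hx, hx0⟩ := hres _ h0
    obtain rfl := corona_bot_adj_inr.1 hx
    rcases hdom _ h0 with ⟨y, hy, hy3⟩ | ⟨y, z, hyz, hy, hz, -, -⟩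
    · obtain rfl := corona_bot_adj_inr.1 hy
      omega
    · exact hyz ((corona_bot_adj_inr.1 hy).trans (corona_bot_adj_inr.1 hz).symm)
  have hne_one : f (.inr (u, default)) ≠ 1 := by
    intro h1
    obtain ⟨x, hx, hx2⟩ := hone _ h1
    obtain rfl := corona_bot_adj_inr.1 hx
    omega
  omega

lemma two_le_pair (hf : IsRDRD (corona G ⊥) f) (u : α) :
    2 ≤ f (.inl u) + f (.inr (u, default)) := by
  by_contra! h
  have := (hf.eq_zero_and_eq_two_of_le_two u h.le).2
  omega

lemma exists_adj_zero_of_inl_eq_zero (hf : IsRDRD (corona G ⊥) f) (u : α)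
    (h0 : f (.inl u) = 0) :
    f (.inr (u, default)) = 0 ∨ ∃ v, G.Adj u v ∧ f (.inl v) = 0 := by
  obtain ⟨x, hx, hx0⟩ := hf.2.2.2 _ h0
  rcases corona_adj_inl hx with ⟨v, rfl, hv⟩ | rfl
  · exact .inr ⟨v, hv, hx0⟩
  · exact .inl hx0

lemma exists_adj_two_le_of_inl_eq_zero (hf : IsRDRD (corona G ⊥) f) (u : α)
    (h0 : f (.inl u) = 0) :
    f (.inr (u, default)) = 3 ∨ ∃ v, G.Adj u v ∧ 2 ≤ f (.inl v) := by
  rcases hf.2.1 _ h0 with ⟨x, hx, hx3⟩ | ⟨y, z, hyz, hy, hz, hy2, hz2⟩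
  · rcases corona_adj_inl hx with ⟨v, rfl, hv⟩ | rfl
    · exact .inr ⟨v, hv, by omega⟩
    · exact .inl hx3
  -- of two distinct neighbours of weight 2, at most one is the pendant
  · rcases corona_adj_inl hy with ⟨v, rfl, hv⟩ | rfl
    · exact .inr ⟨v, hv, hy2.ge⟩
    rcases corona_adj_inl hz with ⟨v, rfl, hv⟩ | rfl
    · exact .inr ⟨v, hv, hz2.ge⟩
    · exact absurd rfl hyz

lemma exists_three_le_pair [Nonempty α] (hf : IsRDRD (corona G ⊥) f) :
    ∃ u, 3 ≤ f (.inl u) + f (.inr (u, default)) := by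
  by_contra! h
  have hpair (u : α) := hf.eq_zero_and_eq_two_of_le_two u (by have := h u; omega)
  obtain ⟨u⟩ := ‹Nonempty α›
  rcases hf.exists_adj_two_le_of_inl_eq_zero u (hpair u).1 with h3 | ⟨v, -, hv⟩
  · have := (hpair u).2
    omega
  · have := (hpair v).1
    omega

lemma three_le_pair_of_subsingleton (hf : IsRDRD (corona G ⊥) f) (u : α)
    (hu : (G.neighborSet u).Subsingleton) :
    3 ≤ f (.inl u) + f (.inr (u, default)) := by
  by_contra! h
  obtain ⟨h0, h2⟩ := hf.eq_zero_and_eq_two_of_le_two u (by omega)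
  -- the single neighbour of `u` in `G` would have to carry weight 0 and weight ≥ 2
  rcases hf.exists_adj_zero_of_inl_eq_zero u h0 with h | ⟨v, hv, hv0⟩
  · omega
  rcases hf.exists_adj_two_le_of_inl_eq_zero u h0 with h | ⟨w, hw, hw2⟩
  · omega
  obtain rfl : v = w := hu hv hw
  omega

lemma two_mul_card_add_one_le_sum [Fintype α] [Fintype β] [Nonempty α]
    (hf : IsRDRD (corona G ⊥) f) :
    2 * Fintype.card α + 1 ≤ ∑ x, f x := by
  rw [sum_corona, Finset.card_univ.symm, mul_comm, ← smul_eq_mul, ← Finset.sum_const]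
  obtain ⟨u, hu⟩ := hf.exists_three_le_pair
  exact Finset.sum_lt_sum (fun u _ => hf.two_le_pair u) ⟨u, Finset.mem_univ u, hu⟩

lemma three_mul_card_le_sum [Fintype α] [Fintype β] (hf : IsRDRD (corona G ⊥) f)
    (hG : ∀ u, (G.neighborSet u).Subsingleton) :
    3 * Fintype.card α ≤ ∑ x, f x := by
  rw [sum_corona, Finset.card_univ.symm, mul_comm, ← smul_eq_mul, ← Finset.sum_const]
  exact Finset.sum_le_sum fun u _ => hf.three_le_pair_of_subsingleton u (hG u)

end IsRDRD

lemma isRDRD_corona_two_one {H : SimpleGraph β} :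
    IsRDRD (corona G H) (Sum.elim (fun _ => 2) (fun _ => 1)) := by
  refine ⟨?_, ?_, ?_, ?_⟩
  · rintro (u | ⟨u, a⟩) <;> simp
  · rintro (u | ⟨u, a⟩) h <;> simp at h
  · rintro (u | ⟨u, a⟩) h
    · simp at h
    · exact ⟨.inl u, rfl, by simp⟩
  · rintro (u | ⟨u, a⟩) h <;> simp at h

lemma sum_corona_two_one [Fintype α] [Fintype β] [Unique β] :
    ∑ x : α ⊕ α × β, Sum.elim (fun _ => 2) (fun _ => 1) x = 3 * Fintype.card α := by
  rw [sum_corona]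
  simp only [Sum.elim_inl, Sum.elim_inr, Finset.sum_const, Finset.card_univ, smul_eq_mul]
  ring

section Centered

variable [DecidableEq α]

def centeredCoronaFun (c : α) : α ⊕ α × β → ℕ :=
  Sum.elim (fun u => if u = c then 2 else 0) (fun p => if p.1 = c then 1 else 2)

lemma isRDRD_centeredCoronaFun [Nonempty β] {H : SimpleGraph β} {c : α}
    (hc : ∀ u ≠ c, G.Adj u c) (hG : ∀ u ≠ c, ∃ w ≠ c, G.Adj u w) :
    IsRDRD (corona G H) (centeredCoronaFun c) := by
  obtain ⟨b⟩ := ‹Nonempty β›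
  refine ⟨?_, ?_, ?_, ?_⟩
  · rintro (u | ⟨u, a⟩) <;> simp only [centeredCoronaFun, Sum.elim_inl, Sum.elim_inr] <;>
      split <;> omega
  · rintro (u | ⟨u, a⟩) h
    · have hu : u ≠ c := by rintro rfl; simp [centeredCoronaFun] at h
      exact .inr ⟨.inl c, .inr (u, b), Sum.inl_ne_inr, hc u hu, rfl, by simp [centeredCoronaFun],
        by simp [centeredCoronaFun, hu]⟩
    · simp only [centeredCoronaFun, Sum.elim_inr] at h
      split at h <;> omega
  · rintro (u | ⟨u, a⟩) h
    · simp only [centeredCoronaFun, Sum.elim_inl] at h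
      split at h <;> omega
    · have hu : u = c := by by_contra hu; simp [centeredCoronaFun, hu] at h
      exact ⟨.inl u, rfl, by simp [centeredCoronaFun, hu]⟩
  · rintro (u | ⟨u, a⟩) h
    · have hu : u ≠ c := by rintro rfl; simp [centeredCoronaFun] at h
      obtain ⟨w, hw, hadj⟩ := hG u hu
      exact ⟨.inl w, hadj, by simp [centeredCoronaFun, hw]⟩
    · simp only [centeredCoronaFun, Sum.elim_inr] at h
      split at h <;> omega

lemma sum_centeredCoronaFun [Fintype α] [Fintype β] [Unique β] (c : α) :
    ∑ x, centeredCoronaFun (β := β) c x = 2 * Fintype.card α + 1 := by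
  have hpair (u : α) :
      centeredCoronaFun (β := β) c (.inl u) + centeredCoronaFun (β := β) c (.inr (u, default)) =
        2 + if u = c then 1 else 0 := by
    by_cases hu : u = c <;> simp [centeredCoronaFun, hu]
  rw [sum_corona]
  simp only [hpair, Finset.sum_add_distrib, Finset.sum_const, Finset.card_univ, smul_eq_mul,
    Finset.sum_ite_eq', Finset.mem_univ, if_true]
  ring

end Centered

lemma gammaRdR_eq_sum [Fintype α] {f : α → ℕ} (hf : IsRDRD G f)
    (hmin : ∀ g, IsRDRD G g → ∑ v, f v ≤ ∑ v, g v) : gammaRdR G = ∑ v, f v :=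
  le_antisymm (Nat.sInf_le ⟨f, hf, rfl⟩)
    (le_csInf ⟨_, f, hf, rfl⟩ fun _ ⟨g, hg, hw⟩ => hw ▸ hmin g hg)

variable [Fintype α] [Fintype β] [Unique β]

lemma gammaRdR_corona_eq_two_mul_card_add_one {c : α} (hc : ∀ u ≠ c, G.Adj u c)
    (hG : ∀ u ≠ c, ∃ w ≠ c, G.Adj u w) :
    gammaRdR (corona G (⊥ : SimpleGraph β)) = 2 * Fintype.card α + 1 := by
  classical
  have : Nonempty α := ⟨c⟩
  rw [gammaRdR_eq_sum (isRDRD_centeredCoronaFun hc hG) fun g hg => ?_, sum_centeredCoronaFun]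
  rw [sum_centeredCoronaFun]
  exact hg.two_mul_card_add_one_le_sum

lemma gammaRdR_corona_eq_three_mul_card (hG : ∀ u, (G.neighborSet u).Subsingleton) :
    gammaRdR (corona G (⊥ : SimpleGraph β)) = 3 * Fintype.card α := by
  rw [gammaRdR_eq_sum isRDRD_corona_two_one fun g hg => ?_, sum_corona_two_one]
  rw [sum_corona_two_one]
  exact hg.three_mul_card_le_sum hG

end SimpleGraph

theorem stmt14 (n : ℕ) (hn : 1 ≤ n) :
    (n ≠ 2 → gammaRdR (corona (⊤ : SimpleGraph (Fin n)) (⊥ : SimpleGraph (Fin 1)))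
        = 2 * n + 1) ∧
    gammaRdR (corona (⊤ : SimpleGraph (Fin 2)) (⊥ : SimpleGraph (Fin 1))) = 6 := by
  refine ⟨fun hn2 => ?_, ?_⟩
  · have hG (u : Fin n) (hu : u ≠ ⟨0, hn⟩) :
        ∃ w ≠ ⟨0, hn⟩, (⊤ : SimpleGraph (Fin n)).Adj u w := by
      have h3 : 3 ≤ n := by have := Fin.val_ne_iff.2 hu; omega
      obtain ⟨w, hw, hwu⟩ := ENat.exists_ne_ne_of_three_le (by simpa using h3) ⟨0, hn⟩ u
      exact ⟨w, hw, hwu.symm⟩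
    rw [gammaRdR_corona_eq_two_mul_card_add_one (fun _ => id) hG, Fintype.card_fin]
  · rw [gammaRdR_corona_eq_three_mul_card fun u v hv w hw => ?_, Fintype.card_fin]
    simp only [mem_neighborSet, top_adj] at hv hw
    omega
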